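/- All divided powers of E_i and F_i have nonnegative matrix entries in the given basis of V: for every i ∈ I, every integer k ≥ 1, and every basis vector b ∈ {X_α : α ∈ R} ∪ {t_j : j ∈ I}, the vector E_i^{(k)}b := ([k]_i!)^{−1}E_i^k b is either 0 or equal to f·b' for some basis vector b' and some Laurent polynomial f ∈ ℕ[v, v^{−1}] with nonnegative integer coefficients; the same holds for F_i^{(k)}b := ([k]_i!)^{−1}F_i^k b. -/

import Mathlib

open scoped RealInnerProductSpace

/-- A finite, reduced, irreducible, crystallographic root system `R` spanning a
finite-dimensional real inner product space `E`, together with a base of simple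
roots indexed by `I`, the integral Cartan pairing `pair`, and for each simple
root `αᵢ` and each root `α` not proportional to `αᵢ` the chain lengths
`p i α`, `q i α` (largest `n ≥ 0` with `α + n αᵢ`, resp. `α - n αᵢ`, a root). -/
structure RootSystemData (E : Type) [NormedAddCommGroup E] [InnerProductSpace ℝ E]
    [FiniteDimensional ℝ E] (I : Type) [Fintype I] : Type where
  R : Set E
  finite : R.Finite
  zero_not_mem : (0 : E) ∉ R
  spans : Submodule.span ℝ R = ⊤
  neg_mem : ∀ α ∈ R, -α ∈ R
  reduced : ∀ α ∈ R, ∀ r : ℝ, r • α ∈ R → r = 1 ∨ r = -1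
  pair : E → E → ℤ
  pair_def : ∀ α ∈ R, ∀ β ∈ R, (pair α β : ℝ) * ⟪α, α⟫ = 2 * ⟪α, β⟫
  reflect_mem : ∀ α ∈ R, ∀ β ∈ R, β - (pair α β : ℝ) • α ∈ R
  irreducible : ∀ R₁ R₂ : Set E, R = R₁ ∪ R₂ →
    (∀ α ∈ R₁, ∀ β ∈ R₂, ⟪α, β⟫ = 0) → R₁ = ∅ ∨ R₂ = ∅
  simple : I → E
  simple_mem : ∀ i, simple i ∈ R
  simple_indep : LinearIndependent ℝ simple
  simple_gen : ∀ α ∈ R,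
    (∃ c : I → ℕ, α = ∑ i, (c i : ℝ) • simple i) ∨
    (∃ c : I → ℕ, α = -(∑ i, (c i : ℝ) • simple i))
  p : I → E → ℕ
  q : I → E → ℕ
  p_mem : ∀ i, ∀ α ∈ R, (∀ r : ℝ, α ≠ r • simple i) →
    ∀ k : ℕ, k ≤ p i α → α + (k : ℝ) • simple i ∈ R
  p_max : ∀ i, ∀ α ∈ R, (∀ r : ℝ, α ≠ r • simple i) →
    α + ((p i α : ℝ) + 1) • simple i ∉ R
  q_mem : ∀ i, ∀ α ∈ R, (∀ r : ℝ, α ≠ r • simple i) →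
    ∀ k : ℕ, k ≤ q i α → α - (k : ℝ) • simple i ∈ R
  q_max : ∀ i, ∀ α ∈ R, (∀ r : ℝ, α ≠ r • simple i) →
    α - ((q i α : ℝ) + 1) • simple i ∉ R

noncomputable section

/-- The field `ℚ(v)` of rational functions in one variable `v` over `ℚ`. -/
abbrev K : Type := RatFunc ℚ

/-- The variable `v` of `ℚ(v)`. -/
def qv : K := RatFunc.X

/-- The quantum integer `[n]ᵢ = (vᵢⁿ - vᵢ⁻ⁿ)/(vᵢ - vᵢ⁻¹)` where `vᵢ = v^d`. -/
def qnum (d : ℕ) (n : ℤ) : K :=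
  ((qv ^ d) ^ n - (qv ^ d) ^ (-n)) / (qv ^ d - (qv ^ d)⁻¹)

/-- The quantum factorial `[n]ᵢ! = ∏_{s=1}^n [s]ᵢ` where `vᵢ = v^d`. -/
def qfact (d : ℕ) (n : ℕ) : K := ∏ s ∈ Finset.range n, qnum d ((s : ℤ) + 1)

variable {E : Type} [NormedAddCommGroup E] [InnerProductSpace ℝ E]
  [FiniteDimensional ℝ E] {I : Type} [Fintype I]

/-- The `ℚ(v)`-vector space `V` with basis `{X_α : α ∈ R} ∪ {t_i : i ∈ I}`. -/
abbrev VV (D : RootSystemData E I) : Type := ({x : E // x ∈ D.R} ⊕ I) →₀ K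

/-- The basis vector `X_α` of `V`, for a root `α`. -/
def XX (D : RootSystemData E I) (a : {x : E // x ∈ D.R}) : VV D :=
  Finsupp.single (Sum.inl a) 1

/-- The basis vector `t_j` of `V`, for `j ∈ I`. -/
def tv (D : RootSystemData E I) (j : I) : VV D :=
  Finsupp.single (Sum.inr j) 1

open Classical in
/-- The operator `E_i` on `V`:  `E_i X_α = [q_{i,α}+1]ᵢ X_{α+αᵢ}` if `α+αᵢ ∈ R`,
`E_i X_{-αᵢ} = tᵢ`, `E_i X_α = 0` otherwise, and
`E_i t_j = [|⟨αⱼ∨,αᵢ⟩|]ⱼ X_{αᵢ}`. -/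
def Eop (D : RootSystemData E I) (d : I → ℕ) (i : I) : VV D →ₗ[K] VV D :=
  Finsupp.lift (VV D) K _ fun b =>
    match b with
    | Sum.inl a =>
        if h : (a : E) + D.simple i ∈ D.R then
          qnum (d i) ((D.q i (a : E) : ℤ) + 1) • XX D ⟨(a : E) + D.simple i, h⟩
        else if (a : E) = -(D.simple i) then tv D i
        else 0
    | Sum.inr j =>
        qnum (d j) |D.pair (D.simple j) (D.simple i)| •
          XX D ⟨D.simple i, D.simple_mem i⟩

open Classical in
/-- The operator `F_i` on `V`:  `F_i X_α = [p_{i,α}+1]ᵢ X_{α-αᵢ}` if `α-αᵢ ∈ R`,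
`F_i X_{αᵢ} = tᵢ`, `F_i X_α = 0` otherwise, and
`F_i t_j = [|⟨αⱼ∨,αᵢ⟩|]ⱼ X_{-αᵢ}`. -/
def Fop (D : RootSystemData E I) (d : I → ℕ) (i : I) : VV D →ₗ[K] VV D :=
  Finsupp.lift (VV D) K _ fun b =>
    match b with
    | Sum.inl a =>
        if h : (a : E) - D.simple i ∈ D.R then
          qnum (d i) ((D.p i (a : E) : ℤ) + 1) • XX D ⟨(a : E) - D.simple i, h⟩
        else if (a : E) = D.simple i then tv D i
        else 0
    | Sum.inr j =>
        qnum (d j) |D.pair (D.simple j) (D.simple i)| •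
          XX D ⟨-(D.simple i), D.neg_mem (D.simple i) (D.simple_mem i)⟩

/-! On a root vector `X_α` with `α` not proportional to `αᵢ`, `E_i^k` climbs the `αᵢ`-string
through `α`, and since `q_{i,α}` grows by one at each step it picks up the factor
`[q+1]ᵢ ⋯ [q+k]ᵢ` with `q = q_{i,α}`. Divided by `[k]ᵢ!` this is the Gaussian binomial
coefficient `[q+k choose k]ᵢ`, which lies in `ℕ[v,v⁻¹]` by the quantum Pascal rule
`[a+b]ᵢ = vᵢ^a [b]ᵢ + vᵢ^(-b) [a]ᵢ`. The basis vectors `X_{±αᵢ}` and `t_j` are killed by `E_i^3`,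
and the few nonzero values are computed directly. Finally `X_α ↦ X_{-α}`, `t_j ↦ t_j`
intertwines `E_i` with `F_i`, which transfers the result to `F_i`. -/

lemma qv_ne_zero : qv ≠ 0 := RatFunc.X_ne_zero

lemma qv_pow_ne_one {n : ℕ} (hn : n ≠ 0) : qv ^ n ≠ 1 := by
  rw [qv, ← RatFunc.algebraMap_X, ← map_pow, ← map_one (algebraMap (Polynomial ℚ) K), Ne,
    (RatFunc.algebraMap_injective ℚ).eq_iff]
  intro h
  simpa [hn] using congrArg Polynomial.natDegree h

lemma qv_pow_zpow_sub_zpow_neg_ne_zero {d n : ℕ} (hd : d ≠ 0) (hn : n ≠ 0) :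
    (qv ^ d) ^ (n : ℤ) - (qv ^ d) ^ (-(n : ℤ)) ≠ 0 := by
  intro h
  rw [sub_eq_zero, zpow_neg, zpow_natCast, ← pow_mul] at h
  apply qv_pow_ne_one (n := d * n * 2) (by positivity)
  rw [pow_mul, sq]
  nth_rewrite 1 [h]
  exact inv_mul_cancel₀ (pow_ne_zero _ qv_ne_zero)

lemma qv_pow_sub_inv_ne_zero {d : ℕ} (hd : d ≠ 0) : qv ^ d - (qv ^ d)⁻¹ ≠ 0 := by
  simpa using qv_pow_zpow_sub_zpow_neg_ne_zero hd one_ne_zero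

lemma qnum_ne_zero {d n : ℕ} (hd : d ≠ 0) (hn : n ≠ 0) : qnum d n ≠ 0 :=
  div_ne_zero (qv_pow_zpow_sub_zpow_neg_ne_zero hd hn) (qv_pow_sub_inv_ne_zero hd)

lemma qnum_zero (d : ℕ) : qnum d 0 = 0 := by simp [qnum]

lemma qnum_one {d : ℕ} (hd : d ≠ 0) : qnum d 1 = 1 := by
  rw [qnum, zpow_one, zpow_neg_one, div_self (qv_pow_sub_inv_ne_zero hd)]

lemma qnum_add (d : ℕ) (a b : ℤ) :
    qnum d (a + b) = (qv ^ d) ^ a * qnum d b + (qv ^ d) ^ (-b) * qnum d a := by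
  have hw : (qv ^ d : K) ≠ 0 := pow_ne_zero _ qv_ne_zero
  simp only [qnum, mul_div_assoc', ← add_div]
  rw [neg_add, zpow_add₀ hw, zpow_add₀ hw]
  ring

lemma qfact_succ (d k : ℕ) : qfact d (k + 1) = qfact d k * qnum d ((k + 1 : ℕ) : ℤ) := by
  rw [qfact, Finset.prod_range_succ, Nat.cast_succ, ← qfact]

lemma qfact_one {d : ℕ} (hd : d ≠ 0) : qfact d 1 = 1 := by
  simp [qfact, qnum_one hd]

lemma qfact_ne_zero {d : ℕ} (hd : d ≠ 0) (k : ℕ) : qfact d k ≠ 0 :=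
  Finset.prod_ne_zero_iff.mpr fun s _ => by exact_mod_cast qnum_ne_zero hd s.succ_ne_zero

def natLaurent : Subsemiring K :=
  (LaurentPolynomial.eval₂ (Nat.castRingHom K) (Units.mk0 qv qv_ne_zero)).rangeS

lemma zpow_mem_natLaurent (m : ℤ) : qv ^ m ∈ natLaurent :=
  ⟨LaurentPolynomial.T m, by simp [Units.val_zpow_eq_zpow_val]⟩

lemma qv_pow_zpow_mem_natLaurent (d : ℕ) (m : ℤ) : (qv ^ d) ^ m ∈ natLaurent := by
  rw [← zpow_natCast, ← zpow_mul]
  exact zpow_mem_natLaurent _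

lemma exists_sum_of_mem_natLaurent {f : K} (hf : f ∈ natLaurent) :
    ∃ (s : Finset ℤ) (c : ℤ → ℕ), f = ∑ m ∈ s, (c m : K) * qv ^ m := by
  obtain ⟨p, rfl⟩ := hf
  refine ⟨p.coeff.support, p.coeff, ?_⟩
  conv_lhs => rw [← p.sum_coeff_single]
  simp [Units.val_zpow_eq_zpow_val, Finsupp.sum]

lemma qnum_mem_natLaurent {d : ℕ} (hd : d ≠ 0) (n : ℕ) : qnum d n ∈ natLaurent := by
  induction n with
  | zero => simp [qnum_zero]
  | succ n ih =>
    rw [Nat.cast_succ, qnum_add, qnum_one hd, mul_one]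
    exact add_mem (qv_pow_zpow_mem_natLaurent _ _) (mul_mem (qv_pow_zpow_mem_natLaurent _ _) ih)

lemma exists_prod_qnum_eq_mul_qfact (d q k : ℕ) :
    ∃ g ∈ natLaurent, ∏ s ∈ Finset.range k, qnum d ((q + s + 1 : ℕ) : ℤ) = g * qfact d k := by
  induction k generalizing q with
  | zero => exact ⟨1, one_mem _, by simp [qfact]⟩
  | succ k ihk =>
    induction q with
    | zero => exact ⟨1, one_mem _, by simp [qfact, add_comm]⟩
    | succ q ihq =>
      obtain ⟨g, hg, hgk⟩ := ihk (q + 1)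
      obtain ⟨g', hg', hgq⟩ := ihq
      refine ⟨(qv ^ d) ^ ((q + 1 : ℕ) : ℤ) * g + (qv ^ d) ^ (-((k + 1 : ℕ) : ℤ)) * g',
        add_mem (mul_mem (qv_pow_zpow_mem_natLaurent _ _) hg)
          (mul_mem (qv_pow_zpow_mem_natLaurent _ _) hg'), ?_⟩
      have hshift : ∏ s ∈ Finset.range (k + 1), qnum d ((q + s + 1 : ℕ) : ℤ) =
          qnum d ((q + 1 : ℕ) : ℤ) * ∏ s ∈ Finset.range k, qnum d ((q + 1 + s + 1 : ℕ) : ℤ) := by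
        rw [Finset.prod_range_succ', mul_comm]
        congr 1
        exact Finset.prod_congr rfl fun s _ => by congr 2; omega
      have hpascal := qnum_add d ((q + 1 : ℕ) : ℤ) ((k + 1 : ℕ) : ℤ)
      rw [← Nat.cast_add] at hpascal
      rw [qfact_succ] at hgq
      rw [Finset.prod_range_succ, qfact_succ, show q + 1 + k + 1 = q + 1 + (k + 1) by omega]
      linear_combination (∏ s ∈ Finset.range k, qnum d ((q + 1 + s + 1 : ℕ) : ℤ)) * hpascal
        + (qv ^ d) ^ ((q + 1 : ℕ) : ℤ) * qnum d ((k + 1 : ℕ) : ℤ) * hgk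
        - (qv ^ d) ^ (-((k + 1 : ℕ) : ℤ)) * hshift + (qv ^ d) ^ (-((k + 1 : ℕ) : ℤ)) * hgq

namespace RootSystemData

variable (D : RootSystemData E I)

lemma simple_ne_zero (i : I) : D.simple i ≠ 0 := fun h => D.zero_not_mem (h ▸ D.simple_mem i)

lemma simple_ne_neg_simple (i : I) : D.simple i ≠ -D.simple i := by
  intro h
  apply D.simple_ne_zero i
  simpa [← two_smul ℝ] using eq_neg_iff_add_eq_zero.mp h

lemma simple_add_simple_not_mem (i : I) : D.simple i + D.simple i ∉ D.R := by
  intro h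
  rw [← two_smul ℝ] at h
  rcases D.reduced _ (D.simple_mem i) 2 h with h | h <;> norm_num at h

lemma eq_simple_or_eq_neg_simple {i : I} {a : E} (ha : a ∈ D.R) {r : ℝ} (h : a = r • D.simple i) :
    a = D.simple i ∨ a = -D.simple i := by
  rcases D.reduced (D.simple i) (D.simple_mem i) r (h ▸ ha) with rfl | rfl <;> simp [h]

lemma add_simple_ne_smul {i : I} {a : E} (ha : ∀ r : ℝ, a ≠ r • D.simple i) (r : ℝ) :
    a + D.simple i ≠ r • D.simple i := by
  intro h
  exact ha (r - 1) (by rw [sub_smul, one_smul, ← h]; abel)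

lemma neg_ne_smul {i : I} {a : E} (ha : ∀ r : ℝ, a ≠ r • D.simple i) (r : ℝ) :
    -a ≠ r • D.simple i := by
  intro h
  exact ha (-r) (by rw [neg_smul, ← h, neg_neg])

lemma q_eq_of_chain {i : I} {a : E} (ha : a ∈ D.R) (ha' : ∀ r : ℝ, a ≠ r • D.simple i) {n : ℕ}
    (hmem : ∀ k : ℕ, k ≤ n → a - (k : ℝ) • D.simple i ∈ D.R)
    (hmax : a - ((n : ℝ) + 1) • D.simple i ∉ D.R) : D.q i a = n := by
  by_contra hne
  rcases lt_or_gt_of_ne hne with h | h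
  · exact D.q_max i a ha ha' (by exact_mod_cast hmem (D.q i a + 1) h)
  · exact hmax (by exact_mod_cast D.q_mem i a ha ha' (n + 1) h)

lemma q_add_simple {i : I} {a : E} (ha : a ∈ D.R) (ha' : ∀ r : ℝ, a ≠ r • D.simple i)
    (hmem : a + D.simple i ∈ D.R) : D.q i (a + D.simple i) = D.q i a + 1 := by
  refine D.q_eq_of_chain hmem (D.add_simple_ne_smul ha') (fun k hk => ?_) fun h => ?_
  · rcases k with _ | k
    · simpa using hmem
    · convert D.q_mem i a ha ha' k (by omega) using 1
      push_cast
      module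
  · exact D.q_max i a ha ha' (by convert h using 1; push_cast; module)

lemma q_neg {i : I} {a : E} (ha : a ∈ D.R) (ha' : ∀ r : ℝ, a ≠ r • D.simple i) :
    D.q i (-a) = D.p i a := by
  refine D.q_eq_of_chain (D.neg_mem a ha) (D.neg_ne_smul ha') (fun k hk => ?_) fun h => ?_
  · convert D.neg_mem _ (D.p_mem i a ha ha' k hk) using 1
    module
  · exact D.p_max i a ha ha' (by convert D.neg_mem _ h using 1; module)

lemma pair_simple_self (i : I) : D.pair (D.simple i) (D.simple i) = 2 := by
  have h := D.pair_def _ (D.simple_mem i) _ (D.simple_mem i)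
  have hne : ⟪D.simple i, D.simple i⟫ ≠ 0 := inner_self_ne_zero.mpr (D.simple_ne_zero i)
  exact_mod_cast mul_right_cancel₀ hne h

end RootSystemData

section Operators

variable (D : RootSystemData E I) (d : I → ℕ) (i : I)

open Finsupp

open Classical in
lemma Eop_single_inl (a : {x : E // x ∈ D.R}) :
    Eop D d i (single (Sum.inl a) 1) =
      if h : (a : E) + D.simple i ∈ D.R then
        qnum (d i) ((D.q i a : ℤ) + 1) • single (Sum.inl ⟨(a : E) + D.simple i, h⟩) 1
      else if (a : E) = -D.simple i then single (Sum.inr i) 1 else 0 := by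
  simp [Eop, XX, tv]

lemma Eop_single_inr (j : I) :
    Eop D d i (single (Sum.inr j) 1) =
      qnum (d j) |D.pair (D.simple j) (D.simple i)| •
        single (Sum.inl ⟨D.simple i, D.simple_mem i⟩) 1 := by
  simp [Eop, XX]

open Classical in
lemma Fop_single_inl (a : {x : E // x ∈ D.R}) :
    Fop D d i (single (Sum.inl a) 1) =
      if h : (a : E) - D.simple i ∈ D.R then
        qnum (d i) ((D.p i a : ℤ) + 1) • single (Sum.inl ⟨(a : E) - D.simple i, h⟩) 1
      else if (a : E) = D.simple i then single (Sum.inr i) 1 else 0 := by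
  simp [Fop, XX, tv]

lemma Fop_single_inr (j : I) :
    Fop D d i (single (Sum.inr j) 1) =
      qnum (d j) |D.pair (D.simple j) (D.simple i)| •
        single (Sum.inl ⟨-D.simple i, D.neg_mem _ (D.simple_mem i)⟩) 1 := by
  simp [Fop, XX]

lemma Eop_single_simple : Eop D d i (single (Sum.inl ⟨D.simple i, D.simple_mem i⟩) 1) = 0 := by
  rw [Eop_single_inl, dif_neg (D.simple_add_simple_not_mem i), if_neg (D.simple_ne_neg_simple i)]

lemma Eop_single_neg_simple :
    Eop D d i (single (Sum.inl ⟨-D.simple i, D.neg_mem _ (D.simple_mem i)⟩) 1) =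
      single (Sum.inr i) 1 := by
  rw [Eop_single_inl, dif_neg (by simpa using D.zero_not_mem), if_pos rfl]

lemma Eop_pow_single_of_ne_smul (k : ℕ) (a : {x : E // x ∈ D.R})
    (ha : ∀ r : ℝ, (a : E) ≠ r • D.simple i) :
    (Eop D d i ^ k) (single (Sum.inl a) 1) = 0 ∨ ∃ b,
      (Eop D d i ^ k) (single (Sum.inl a) 1) =
        (∏ s ∈ Finset.range k, qnum (d i) ((D.q i a + s + 1 : ℕ) : ℤ)) • single b 1 := by
  induction k generalizing a with
  | zero => exact .inr ⟨Sum.inl a, by simp⟩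
  | succ k ih =>
    rw [pow_succ, Module.End.mul_apply, Eop_single_inl]
    by_cases hmem : (a : E) + D.simple i ∈ D.R
    · rw [dif_pos hmem, map_smul]
      rcases ih ⟨_, hmem⟩ (D.add_simple_ne_smul ha) with h | ⟨b, h⟩
      · exact .inl (by rw [h, smul_zero])
      refine .inr ⟨b, ?_⟩
      rw [h, smul_smul, Finset.prod_range_succ', D.q_add_simple a.2 ha hmem, mul_comm]
      congr 2
      exact Finset.prod_congr rfl fun s _ => by congr 2; omega
    · have hne : (a : E) ≠ -D.simple i := fun h => ha (-1) (by rw [h, neg_one_smul])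
      exact .inl (by rw [dif_neg hmem, if_neg hne, map_zero])

end Operators

namespace RootSystemData

variable (D : RootSystemData E I) (d : I → ℕ) (i : I)

open Finsupp

def negIndex : {x : E // x ∈ D.R} ⊕ I → {x : E // x ∈ D.R} ⊕ I :=
  Sum.map (fun a => ⟨-(a : E), D.neg_mem _ a.2⟩) id

lemma negIndex_negIndex (b : {x : E // x ∈ D.R} ⊕ I) : D.negIndex (D.negIndex b) = b := by
  rcases b with a | j <;> simp [negIndex]

def negMap : VV D →ₗ[K] VV D := lmapDomain K K D.negIndex

lemma negMap_single (b : {x : E // x ∈ D.R} ⊕ I) (c : K) :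
    D.negMap (single b c) = single (D.negIndex b) c :=
  mapDomain_single

lemma Fop_comp_negMap : Fop D d i ∘ₗ D.negMap = D.negMap ∘ₗ Eop D d i := by
  ext b : 2
  rcases b with a | j
  · simp only [LinearMap.comp_apply, lsingle_apply, negMap_single]
    change Fop D d i (single (Sum.inl ⟨-(a : E), _⟩) 1) = _
    rw [Fop_single_inl, Eop_single_inl]
    by_cases h : (a : E) + D.simple i ∈ D.R
    · have h' : -(a : E) - D.simple i ∈ D.R := by convert D.neg_mem _ h using 1; abel
      have ha : ∀ r : ℝ, (a : E) ≠ r • D.simple i := fun r hr => by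
        rcases D.eq_simple_or_eq_neg_simple a.2 hr with ha | ha <;> rw [ha] at h
        · exact D.simple_add_simple_not_mem i h
        · exact D.zero_not_mem (by simpa using h)
      have hpq : D.p i (-(a : E)) = D.q i a := by
        simpa using (D.q_neg (D.neg_mem _ a.2) (D.neg_ne_smul ha)).symm
      rw [dif_pos h', dif_pos h, map_smul, negMap_single, hpq]
      congr
      exact (neg_add' _ _).symm
    · have h' : -(a : E) - D.simple i ∉ D.R := fun h' => h (by convert D.neg_mem _ h' using 1; abel)
      rw [dif_neg h', dif_neg h, neg_eq_iff_eq_neg]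
      split_ifs <;> simp [negMap_single, negIndex]
  · simp only [LinearMap.comp_apply, lsingle_apply, negMap_single, Eop_single_inr, map_smul]
    exact Fop_single_inr D d i j

end RootSystemData

def dividedPow {M : Type*} [AddCommGroup M] [Module K M] (d k : ℕ) (T : Module.End K M) :
    Module.End K M :=
  (qfact d k)⁻¹ • T ^ k

lemma dividedPow_zero {M : Type*} [AddCommGroup M] [Module K M] (d : ℕ) (T : Module.End K M) :
    dividedPow d 0 T = 1 := by
  simp [dividedPow, qfact]

def IsNatLaurentMultipleOfSingle {ι : Type*} (x : ι →₀ K) : Prop :=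
  x = 0 ∨ ∃ b, ∃ g ∈ natLaurent, x = g • Finsupp.single b 1

namespace IsNatLaurentMultipleOfSingle

variable {ι κ : Type*} {x : ι →₀ K}

lemma lmapDomain (hx : IsNatLaurentMultipleOfSingle x) (f : ι → κ) :
    IsNatLaurentMultipleOfSingle (Finsupp.lmapDomain K K f x) := by
  rcases hx with rfl | ⟨b, g, hg, rfl⟩
  · exact .inl (map_zero _)
  · exact .inr ⟨f b, g, hg, by simp⟩

lemma exists_sum (hx : IsNatLaurentMultipleOfSingle x) :
    x = 0 ∨ ∃ (b : ι) (s : Finset ℤ) (c : ℤ → ℕ),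
      x = (∑ m ∈ s, (c m : K) * qv ^ m) • Finsupp.single b 1 := by
  rcases hx with h | ⟨b, g, hg, rfl⟩
  · exact .inl h
  · obtain ⟨s, c, rfl⟩ := exists_sum_of_mem_natLaurent hg
    exact .inr ⟨b, s, c, rfl⟩

end IsNatLaurentMultipleOfSingle

section DividedPowers

variable (D : RootSystemData E I) (d : I → ℕ) (i : I)

open Finsupp

lemma isNatLaurentMultipleOfSingle_dividedPow_zero (b : {x : E // x ∈ D.R} ⊕ I) :
    IsNatLaurentMultipleOfSingle (dividedPow (d i) 0 (Eop D d i) (single b 1)) :=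
  .inr ⟨b, 1, one_mem _, by simp [dividedPow_zero]⟩

lemma isNatLaurentMultipleOfSingle_dividedPow_Eop_of_ne_smul (hd : d i ≠ 0) (k : ℕ)
    (a : {x : E // x ∈ D.R}) (ha : ∀ r : ℝ, (a : E) ≠ r • D.simple i) :
    IsNatLaurentMultipleOfSingle (dividedPow (d i) k (Eop D d i) (single (Sum.inl a) 1)) := by
  rcases Eop_pow_single_of_ne_smul D d i k a ha with h | ⟨b, h⟩
  · exact .inl (by rw [dividedPow, LinearMap.smul_apply, h, smul_zero])
  obtain ⟨g, hg, hprod⟩ := exists_prod_qnum_eq_mul_qfact (d i) (D.q i a) k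
  refine .inr ⟨b, g, hg, ?_⟩
  rw [dividedPow, LinearMap.smul_apply, h, hprod, smul_smul, mul_left_comm,
    inv_mul_cancel₀ (qfact_ne_zero hd k), mul_one]

lemma isNatLaurentMultipleOfSingle_dividedPow_Eop_simple (k : ℕ) :
    IsNatLaurentMultipleOfSingle
      (dividedPow (d i) k (Eop D d i) (single (Sum.inl ⟨D.simple i, D.simple_mem i⟩) 1)) := by
  rcases k with _ | k
  · exact isNatLaurentMultipleOfSingle_dividedPow_zero D d i _
  · exact .inl (by
      rw [dividedPow, LinearMap.smul_apply, pow_succ, Module.End.mul_apply, Eop_single_simple,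
        map_zero, smul_zero])

lemma isNatLaurentMultipleOfSingle_dividedPow_Eop_neg_simple (hd : d i ≠ 0) (k : ℕ) :
    IsNatLaurentMultipleOfSingle (dividedPow (d i) k (Eop D d i)
      (single (Sum.inl ⟨-D.simple i, D.neg_mem _ (D.simple_mem i)⟩) 1)) := by
  match k with
  | 0 => exact isNatLaurentMultipleOfSingle_dividedPow_zero D d i _
  | 1 =>
    refine .inr ⟨Sum.inr i, 1, one_mem _, ?_⟩
    rw [dividedPow, LinearMap.smul_apply, pow_one, Eop_single_neg_simple, qfact_one hd, inv_one]
  | 2 =>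
    refine .inr ⟨Sum.inl ⟨D.simple i, D.simple_mem i⟩, 1, one_mem _, ?_⟩
    rw [dividedPow, LinearMap.smul_apply, sq, Module.End.mul_apply, Eop_single_neg_simple,
      Eop_single_inr, D.pair_simple_self, qfact_succ, qfact_one hd, smul_smul, one_mul]
    congr 1
    exact inv_mul_cancel₀ (qnum_ne_zero hd two_ne_zero)
  | k + 3 =>
    refine .inl ?_
    simp only [dividedPow, LinearMap.smul_apply, pow_succ, Module.End.mul_apply,
      Eop_single_neg_simple, Eop_single_inr, map_smul, Eop_single_simple, map_zero, smul_zero]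

lemma isNatLaurentMultipleOfSingle_dividedPow_Eop_inr (hd : ∀ j, d j ≠ 0) (k : ℕ) (j : I) :
    IsNatLaurentMultipleOfSingle (dividedPow (d i) k (Eop D d i) (single (Sum.inr j) 1)) := by
  match k with
  | 0 => exact isNatLaurentMultipleOfSingle_dividedPow_zero D d i _
  | 1 =>
    have hmem : qnum (d j) |D.pair (D.simple j) (D.simple i)| ∈ natLaurent := by
      rw [← Int.natCast_natAbs]
      exact qnum_mem_natLaurent (hd j) _
    refine .inr ⟨Sum.inl ⟨D.simple i, D.simple_mem i⟩, _, hmem, ?_⟩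
    rw [dividedPow, LinearMap.smul_apply, pow_one, Eop_single_inr, qfact_one (hd i), inv_one,
      one_smul]
  | k + 2 =>
    refine .inl ?_
    simp only [dividedPow, LinearMap.smul_apply, pow_succ, Module.End.mul_apply,
      Eop_single_inr, map_smul, Eop_single_simple, map_zero, smul_zero]

lemma isNatLaurentMultipleOfSingle_dividedPow_Eop (hd : ∀ j, d j ≠ 0) (k : ℕ)
    (b : {x : E // x ∈ D.R} ⊕ I) :
    IsNatLaurentMultipleOfSingle (dividedPow (d i) k (Eop D d i) (single b 1)) := by
  rcases b with a | j
  · by_cases hpos : (a : E) = D.simple i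
    · obtain rfl : a = ⟨D.simple i, D.simple_mem i⟩ := Subtype.ext hpos
      exact isNatLaurentMultipleOfSingle_dividedPow_Eop_simple D d i k
    by_cases hneg : (a : E) = -D.simple i
    · obtain rfl : a = ⟨-D.simple i, D.neg_mem _ (D.simple_mem i)⟩ := Subtype.ext hneg
      exact isNatLaurentMultipleOfSingle_dividedPow_Eop_neg_simple D d i (hd i) k
    refine isNatLaurentMultipleOfSingle_dividedPow_Eop_of_ne_smul D d i (hd i) k a fun r h => ?_
    rcases D.eq_simple_or_eq_neg_simple a.2 h with h' | h'
    exacts [hpos h', hneg h']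
  · exact isNatLaurentMultipleOfSingle_dividedPow_Eop_inr D d i hd k j

lemma isNatLaurentMultipleOfSingle_dividedPow_Fop (hd : ∀ j, d j ≠ 0) (k : ℕ)
    (b : {x : E // x ∈ D.R} ⊕ I) :
    IsNatLaurentMultipleOfSingle (dividedPow (d i) k (Fop D d i) (single b 1)) := by
  have hcomm := Module.End.commute_pow_left_of_commute (D.Fop_comp_negMap d i) k
  have hconj : dividedPow (d i) k (Fop D d i) (single b 1) =
      D.negMap (dividedPow (d i) k (Eop D d i) (single (D.negIndex b) 1)) := by
    conv_lhs => rw [← D.negIndex_negIndex b, ← D.negMap_single]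
    simp only [dividedPow, LinearMap.smul_apply, map_smul]
    exact congrArg _ (LinearMap.congr_fun hcomm _)
  rw [hconj]
  exact (isNatLaurentMultipleOfSingle_dividedPow_Eop D d i hd k _).lmapDomain D.negIndex

end DividedPowers

theorem stmt14_general {E : Type} [NormedAddCommGroup E] [InnerProductSpace ℝ E]
    [FiniteDimensional ℝ E] {I : Type} [Fintype I]
    (D : RootSystemData E I) (d : I → ℕ)
    (hd123 : ∀ i, d i = 1 ∨ d i = 2 ∨ d i = 3) :
    ∀ i : I, ∀ k : ℕ, 1 ≤ k → ∀ b : {x : E // x ∈ D.R} ⊕ I,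
      ((qfact (d i) k)⁻¹ • (Eop D d i ^ k) (Finsupp.single b (1 : K)) = 0 ∨
        ∃ (b' : {x : E // x ∈ D.R} ⊕ I) (s : Finset ℤ) (c : ℤ → ℕ),
          (qfact (d i) k)⁻¹ • (Eop D d i ^ k) (Finsupp.single b (1 : K))
            = (∑ m ∈ s, (c m : K) * qv ^ m) • Finsupp.single b' (1 : K)) ∧
      ((qfact (d i) k)⁻¹ • (Fop D d i ^ k) (Finsupp.single b (1 : K)) = 0 ∨
        ∃ (b' : {x : E // x ∈ D.R} ⊕ I) (s : Finset ℤ) (c : ℤ → ℕ),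
          (qfact (d i) k)⁻¹ • (Fop D d i ^ k) (Finsupp.single b (1 : K))
            = (∑ m ∈ s, (c m : K) * qv ^ m) • Finsupp.single b' (1 : K)) := by
  have hd : ∀ j, d j ≠ 0 := fun j => by rcases hd123 j with h | h | h <;> omega
  intro i k _ b
  exact ⟨(isNatLaurentMultipleOfSingle_dividedPow_Eop D d i hd k b).exists_sum,
    (isNatLaurentMultipleOfSingle_dividedPow_Fop D d i hd k b).exists_sum⟩

/-- All divided powers of `E_i` and of `F_i` have matrix entries in
`ℕ[v,v⁻¹]` in the basis `{X_α} ∪ {t_j}` of `V`: applied to a basis vector,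
`([k]ᵢ!)⁻¹ E_i^k` (resp. `([k]ᵢ!)⁻¹ F_i^k`) gives `0` or `f` times a basis
vector where `f` is a Laurent polynomial in `v` with coefficients in `ℕ`. -/
theorem stmt14 {E : Type} [NormedAddCommGroup E] [InnerProductSpace ℝ E]
    [FiniteDimensional ℝ E] {I : Type} [Fintype I]
    (D : RootSystemData E I) (d : I → ℕ)
    (hd : ∀ i, 2 * (d i : ℝ) = ⟪D.simple i, D.simple i⟫)
    (hd123 : ∀ i, d i = 1 ∨ d i = 2 ∨ d i = 3)
    (hnorm : ∀ β ∈ D.R, (2 : ℝ) ≤ ⟪β, β⟫) :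
    ∀ i : I, ∀ k : ℕ, 1 ≤ k → ∀ b : {x : E // x ∈ D.R} ⊕ I,
      ((qfact (d i) k)⁻¹ • (Eop D d i ^ k) (Finsupp.single b (1 : K)) = 0 ∨
        ∃ (b' : {x : E // x ∈ D.R} ⊕ I) (s : Finset ℤ) (c : ℤ → ℕ),
          (qfact (d i) k)⁻¹ • (Eop D d i ^ k) (Finsupp.single b (1 : K))
            = (∑ m ∈ s, (c m : K) * qv ^ m) • Finsupp.single b' (1 : K)) ∧
      ((qfact (d i) k)⁻¹ • (Fop D d i ^ k) (Finsupp.single b (1 : K)) = 0 ∨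
        ∃ (b' : {x : E // x ∈ D.R} ⊕ I) (s : Finset ℤ) (c : ℤ → ℕ),
          (qfact (d i) k)⁻¹ • (Fop D d i ^ k) (Finsupp.single b (1 : K))
            = (∑ m ∈ s, (c m : K) * qv ^ m) • Finsupp.single b' (1 : K)) :=
  stmt14_general D d hd123
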